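/- For the separate-group direct IMU one-step Jacobian F^S = [[I,0,0],[−(C̄(u−b̄))^∧ T, I, 0],[−½T²(C̄(u−b̄))^∧, T I, I]] and the state-dependent null space N_S(v̄, r̄) = [[g, 0],[−v̄^∧ g, 0],[−r̄^∧ g, I₃]], the relation F^S N_S(v̄_k, r̄_k) = N_S(v̄_{k+1}, r̄_{k+1}) holds when v̄_{k+1} = v̄_k + T C̄(u − b̄) + T g and r̄_{k+1} = r̄_k + T v̄_k + ½T²(C̄(u−b̄) + g), using the identity g^∧ g = 0 and a×b = −b×a. -/

import Mathlib

open Matrix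
open scoped Matrix

/-- The skew-symmetric matrix `a^∧` of `a ∈ ℝ³`. -/
def hat (a : Fin 3 → ℝ) : Matrix (Fin 3) (Fin 3) ℝ :=
  !![0, -a 2, a 1; a 2, 0, -a 0; -a 1, a 0, 0]

/-- Index type for the 9-dimensional error state `(δφ, δv, δr)`. -/
abbrev Idx9 := Fin 3 ⊕ (Fin 3 ⊕ Fin 3)

/-- The separate-group one-step direct IMU Jacobian
`F^S = [[I,0,0],[−T a^∧, I, 0],[−½T² a^∧, T I, I]]` with `a = C̄(u − b̄)`. -/
noncomputable def FS (a : Fin 3 → ℝ) (T : ℝ) : Matrix Idx9 Idx9 ℝ :=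
  fromBlocks 1 0
    (fromRows (-(T • hat a)) (-(((1 : ℝ) / 2 * T ^ 2) • hat a)))
    (fromBlocks 1 0 (T • (1 : Matrix (Fin 3) (Fin 3) ℝ)) 1)

/-- The state-dependent null space
`N_S(v̄, r̄) = [[g, 0],[−v̄^∧ g, 0],[−r̄^∧ g, I₃]] ∈ ℝ^{9×4}`. -/
def NS (g v r : Fin 3 → ℝ) : Matrix Idx9 (Fin 1 ⊕ Fin 3) ℝ :=
  fromBlocks (Matrix.of fun i (_ : Fin 1) => g i) 0
    (fromRows (Matrix.of fun i (_ : Fin 1) => (-(v ⨯₃ g)) i)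
      (Matrix.of fun i (_ : Fin 1) => (-(r ⨯₃ g)) i))
    (fromRows 0 1)

/-!
The blocks `-T a^∧` and `-½T² a^∧` of `F^S` act on the gravity column of `N_S` as `a ⨯ g`, so
`F^S N_S(v̄, r̄) = N_S(v̄ + T a, r̄ + T v̄ + ½T² a)` with `a = C̄(u − b̄)`: this is the
propagation without the gravity terms. These terms `T g` and `½T² g` are invisible to `N_S`, which
depends on `v̄, r̄` only through `v̄ ⨯ g` and `r̄ ⨯ g`, and `g ⨯ g = 0`.
-/

lemma hat_mulVec (a b : Fin 3 → ℝ) : hat a *ᵥ b = a ⨯₃ b := by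
  ext i
  fin_cases i <;> simp [hat, cross_apply, mulVec, dotProduct, Fin.sum_univ_three] <;> ring

lemma hat_mul_replicateCol {ι : Type*} (a b : Fin 3 → ℝ) :
    hat a * replicateCol ι b = replicateCol ι (a ⨯₃ b) := by
  rw [← replicateCol_mulVec, hat_mulVec]

lemma NS_eq_fromBlocks (g v r : Fin 3 → ℝ) :
    NS g v r = fromBlocks (replicateCol _ g) 0
      (fromRows (replicateCol _ (-(v ⨯₃ g))) (replicateCol _ (-(r ⨯₃ g)))) (fromRows 0 1) :=
  rfl

lemma NS_add_smul_self (g v r : Fin 3 → ℝ) (c d : ℝ) :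
    NS g (v + c • g) (r + d • g) = NS g v r := by
  simp only [NS_eq_fromBlocks, map_add, map_smul, LinearMap.add_apply, LinearMap.smul_apply,
    cross_self, smul_zero, add_zero]

lemma FS_mul_NS (a g v r : Fin 3 → ℝ) (T : ℝ) :
    FS a T * NS g v r = NS g (v + T • a) (r + T • v + ((1 : ℝ) / 2 * T ^ 2) • a) := by
  simp only [FS, NS_eq_fromBlocks, fromBlocks_multiply, fromBlocks_mul_fromRows, fromRows_mul,
    Matrix.neg_mul, Matrix.smul_mul, hat_mul_replicateCol, Matrix.one_mul, Matrix.zero_mul,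
    Matrix.mul_zero, Matrix.mul_one, add_zero, zero_add]
  congr 1
  ext (i | i) j <;>
    simp only [fromRows_apply_inl, fromRows_apply_inr, Matrix.add_apply, Matrix.neg_apply,
      Matrix.smul_apply, replicateCol_apply, map_add, map_smul, LinearMap.add_apply,
      LinearMap.smul_apply, Pi.add_apply, Pi.smul_apply, Pi.neg_apply, smul_eq_mul] <;>
    ring

/-- The one-step linearized dynamics transport the separate-group null space to the
null space at the propagated state:
`F^S N_S(v̄_k, r̄_k) = N_S(v̄_{k+1}, r̄_{k+1})` where
`v̄_{k+1} = v̄_k + T C̄(u−b̄) + T g` and `r̄_{k+1} = r̄_k + T v̄_k + ½T²(C̄(u−b̄) + g)`. -/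
theorem FS_transports_nullspace
    (Cbar : Matrix (Fin 3) (Fin 3) ℝ) (u bbar g vk rk vk1 rk1 : Fin 3 → ℝ) (T : ℝ)
    (hv : vk1 = vk + T • (Cbar *ᵥ (u - bbar)) + T • g)
    (hr : rk1 = rk + T • vk + ((1 : ℝ) / 2 * T ^ 2) • (Cbar *ᵥ (u - bbar) + g)) :
    FS (Cbar *ᵥ (u - bbar)) T * NS g vk rk = NS g vk1 rk1 := by
  set a := Cbar *ᵥ (u - bbar)
  have hr' : rk1 = (rk + T • vk + ((1 : ℝ) / 2 * T ^ 2) • a) + ((1 : ℝ) / 2 * T ^ 2) • g := by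
    rw [hr, smul_add, ← add_assoc]
  rw [FS_mul_NS, hv, hr', NS_add_smul_self]
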